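/- Let L : ℝ^{k-1} → ℝ^k be the reduced form of a PERM loss whose template ψ is semi-coercive. Then for every ζ ∈ ℝ^k, the set {z ∈ ℝ^{k-1} : L(z) ⪯ ζ entrywise} is bounded. -/
import Mathlib


open Matrix

/- Convention: the label set `[k]` (`k = n+1`) is modeled by `Fin (n+1)` with index `0`
playing the role of the class `k`. -/

/-- The matrix label code `ρ_y`. -/
def rho (n : ℕ) (y : Fin (n + 1)) : Matrix (Fin n) (Fin n) ℝ :=
  Matrix.of fun i j => if j.succ = y then -1 else if i = j then 1 else 0

lemma rho_zero_mulVec (n : ℕ) (z : Fin n → ℝ) : (rho n 0).mulVec z = z := by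
  funext j
  simp [rho, Matrix.mulVec, dotProduct, Fin.succ_ne_zero, ite_mul]

lemma rho_succ_mulVec_self (n : ℕ) (i : Fin n) (z : Fin n → ℝ) :
    ((rho n i.succ).mulVec z) i = -z i := by
  simp only [rho, Matrix.mulVec, dotProduct, Matrix.of_apply, Fin.succ_inj]
  rw [Finset.sum_eq_single i]
  · simp
  · intro l _ hl
    simp [hl, Ne.symm hl]
  · simp

/-- Let `L : ℝ^{k-1} → ℝ^k`, `L_y(z) = ψ(ρ_y z)`, be the reduced form of a PERM loss
whose template `ψ` is semi-coercive. Then for every `ζ ∈ ℝ^k`, the set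
`{z : L(z) ⪯ ζ entrywise}` is bounded. -/
theorem reduced_form_sublevel_bounded (n : ℕ) (ψ : (Fin n → ℝ) → ℝ)
    (hsc : ∀ c : ℝ, ∃ b : ℝ, ∀ z : Fin n → ℝ, ψ z ≤ c → ∀ j, b ≤ z j) :
    ∀ ζ : Fin (n + 1) → ℝ,
      Bornology.IsBounded
        {z : Fin n → ℝ | ∀ y : Fin (n + 1), ψ ((rho n y).mulVec z) ≤ ζ y} := by
  intro ζ
  choose B hB using hsc
  have hsub : {z : Fin n → ℝ | ∀ y : Fin (n + 1), ψ ((rho n y).mulVec z) ≤ ζ y} ⊆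
      Set.pi Set.univ (fun i : Fin n => Set.Icc (B (ζ 0)) (-(B (ζ i.succ)))) := by
    intro z hz i _
    constructor
    · have h0 := hB (ζ 0) _ (hz 0) i
      rwa [rho_zero_mulVec] at h0
    · have h := hB (ζ i.succ) _ (hz i.succ) i
      rw [rho_succ_mulVec_self] at h
      linarith
  exact (Bornology.IsBounded.pi (fun i => Metric.isBounded_Icc _ _)).subset hsub
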